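/- arXiv:1602.02882 — 2 statements merged into one kernel-verified Lean document; each statement's English description precedes it below -/
import Mathlib

section
/- Let d ≥ 1, let h : ℝ^d → ℂ satisfy |h(x)| ≤ A/(1 + |x|^{d+τ}) for all x ∈ ℝ^d, with fixed constants A < ∞ and τ > 0, and let (x_i)_{i ∈ ℕ⁺} be points in ℝ^d satisfying |x_i − x_j| ≥ Δ for all i ≠ j, with a fixed Δ > 0. Then for every ε > 0 there exists a fixed δ ∈ (0, ∞) such that sup over all n ∈ ℕ⁺ and all 1 ≤ i ≤ n of the sum over 1 ≤ j ≤ n, j ≠ i, of |h(δ(x_i − x_j))| is at most ε. -/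
/-!
With `s = d + τ`, the decay bound gives `‖h (δ v)‖ ≤ A δ^{-s} ‖v‖^{-s}`, so it suffices that
`∑_{j ≠ i} ‖x_i - x_j‖^{-s}` is bounded uniformly in `i` and `n`. Rounding `Δ⁻¹ x_j` down
coordinatewise is injective on a `Δ`-separated family and shrinks distances by at most a factor
`Δ / 2`, so that sum is dominated by `(Δ / 2)^{-s} ∑_{z ∈ ℤ^d} ‖z‖^{-s}`, which converges as
`s > d`.
-/

open Filter

abbrev intLattice (ι : Type*) [Fintype ι] : Submodule ℤ (ι → ℝ) :=
  Submodule.span ℤ (Set.range (Pi.basisFun ℝ ι))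

namespace intLattice

variable {ι : Type*} [Fintype ι]

lemma summable_norm_rpow {r : ℝ} (hr : r < -Fintype.card ι) :
    Summable fun z : intLattice ι => ‖z‖ ^ r :=
  ZLattice.summable_norm_rpow _ r (by
    rwa [ZLattice.rank ℝ, Module.finrank_fintype_fun_eq_card])

noncomputable def floor (v : ι → ℝ) : intLattice ι :=
  ⟨fun c => (⌊v c⌋ : ℝ), (Module.Basis.mem_span_iff_repr_mem ℤ _ _).2 fun c => ⟨⌊v c⌋, by simp⟩⟩

lemma norm_floor_sub_floor_sub_lt_one (v w : ι → ℝ) :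
    ‖((floor v : ι → ℝ) - floor w) - (v - w)‖ < 1 := by
  refine (pi_norm_lt_iff one_pos).2 fun c => ?_
  simp only [floor, Pi.sub_apply, Real.norm_eq_abs, abs_sub_lt_iff]
  constructor <;> linarith [Int.floor_le (v c), Int.lt_floor_add_one (v c),
    Int.floor_le (w c), Int.lt_floor_add_one (w c)]

lemma norm_floor_sub_floor_lt (v w : ι → ℝ) : ‖floor v - floor w‖ < ‖v - w‖ + 1 := by
  have := norm_floor_sub_floor_sub_lt_one v w
  have := norm_sub_norm_le ((floor v : ι → ℝ) - floor w) (v - w)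
  change ‖((floor v - floor w : intLattice ι) : ι → ℝ)‖ < _
  rw [Submodule.coe_sub]
  linarith

lemma norm_sub_lt_one_of_floor_eq {v w : ι → ℝ} (h : floor v = floor w) : ‖v - w‖ < 1 := by
  simpa [h, norm_sub_rev] using norm_floor_sub_floor_sub_lt_one v w

end intLattice

section Separated

variable {ι α : Type*} [Fintype ι] {Δ : ℝ}

open intLattice

lemma half_mul_norm_floor_sub_floor_le (hΔ : 0 < Δ) {v w : ι → ℝ} (hvw : Δ ≤ ‖v - w‖) :
    Δ / 2 * ‖floor (Δ⁻¹ • v) - floor (Δ⁻¹ • w)‖ ≤ ‖v - w‖ := by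
  have hlt := norm_floor_sub_floor_lt (Δ⁻¹ • v) (Δ⁻¹ • w)
  rw [← smul_sub, norm_smul, Real.norm_of_nonneg (inv_nonneg.2 hΔ.le)] at hlt
  have : Δ * (Δ⁻¹ * ‖v - w‖) = ‖v - w‖ := by field_simp
  nlinarith

lemma injective_floor_of_separated (hΔ : 0 < Δ) {x : α → ι → ℝ}
    (hsep : Pairwise fun i j => Δ ≤ ‖x i - x j‖) :
    Function.Injective fun j => floor (Δ⁻¹ • x j) := by
  intro i j hij
  by_contra hne
  have hlt := norm_sub_lt_one_of_floor_eq hij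
  rw [← smul_sub, norm_smul, Real.norm_of_nonneg (inv_nonneg.2 hΔ.le), inv_mul_lt_one₀ hΔ] at hlt
  exact (hsep hne).not_gt hlt

theorem exists_forall_sum_norm_sub_rpow_le_of_separated (hΔ : 0 < Δ) {x : α → ι → ℝ}
    (hsep : Pairwise fun i j => Δ ≤ ‖x i - x j‖) {r : ℝ} (hr : r < -Fintype.card ι) :
    ∃ C, ∀ i (F : Finset α), ∑ j ∈ F, ‖x i - x j‖ ^ r ≤ C := by
  have hr0 : r < 0 := hr.trans_le (neg_nonpos.2 (Nat.cast_nonneg _))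
  set g := fun j => floor (Δ⁻¹ • x j)
  have hg : Function.Injective g := injective_floor_of_separated hΔ hsep
  refine ⟨(Δ / 2) ^ r * ∑' z : intLattice ι, ‖z‖ ^ r, fun i F => ?_⟩
  have hterm : ∀ j, ‖x i - x j‖ ^ r ≤ (Δ / 2) ^ r * ‖g i - g j‖ ^ r := by
    intro j
    -- `0 ^ r = 0` for `Real.rpow`, so the diagonal term vanishes
    rcases eq_or_ne j i with rfl | hji
    · simp [Real.zero_rpow hr0.ne]
    have hpos : 0 < ‖g i - g j‖ := norm_pos_iff.2 (sub_ne_zero.2 (hg.ne hji.symm))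
    rw [← Real.mul_rpow (by positivity) hpos.le]
    exact Real.rpow_le_rpow_of_nonpos (by positivity)
      (half_mul_norm_floor_sub_floor_le hΔ (hsep hji.symm)) hr0.le
  calc ∑ j ∈ F, ‖x i - x j‖ ^ r ≤ ∑ j ∈ F, (Δ / 2) ^ r * ‖g i - g j‖ ^ r :=
        Finset.sum_le_sum fun j _ => hterm j
    _ = (Δ / 2) ^ r * ∑ z ∈ F.image (g i - g ·), ‖z‖ ^ r := by
        rw [Finset.sum_image fun j _ k _ hjk => hg (sub_right_injective hjk), Finset.mul_sum]
    _ ≤ (Δ / 2) ^ r * ∑' z, ‖z‖ ^ r := by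
        gcongr
        exact (summable_norm_rpow hr).sum_le_tsum _ fun _ _ => by positivity

end Separated

section Decay

variable {E F : Type*} [NormedAddCommGroup E] [NormedAddCommGroup F]
  {h : E → F} {A s : ℝ}

lemma nonneg_of_forall_norm_le_div_one_add_rpow (hs : s ≠ 0)
    (hdecay : ∀ v, ‖h v‖ ≤ A / (1 + ‖v‖ ^ s)) : 0 ≤ A := by
  simpa [Real.zero_rpow hs] using (norm_nonneg _).trans (hdecay 0)

lemma norm_apply_smul_le_of_decay [NormedSpace ℝ E] (hs : 0 < s)
    (hdecay : ∀ v, ‖h v‖ ≤ A / (1 + ‖v‖ ^ s))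
    {δ : ℝ} (hδ : 0 < δ) {v : E} (hv : v ≠ 0) :
    ‖h (δ • v)‖ ≤ A * δ ^ (-s) * ‖v‖ ^ (-s) := by
  have hA := nonneg_of_forall_norm_le_div_one_add_rpow hs.ne' hdecay
  have hδv : 0 < ‖δ • v‖ := norm_pos_iff.2 (smul_ne_zero hδ.ne' hv)
  calc ‖h (δ • v)‖ ≤ A / (1 + ‖δ • v‖ ^ s) := hdecay _
    _ ≤ A / ‖δ • v‖ ^ s := div_le_div_of_nonneg_left hA (by positivity) (by linarith)
    _ = A * δ ^ (-s) * ‖v‖ ^ (-s) := by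
        rw [norm_smul, Real.norm_of_nonneg hδ.le, Real.mul_rpow hδ.le (norm_nonneg v),
          Real.rpow_neg hδ.le, Real.rpow_neg (norm_nonneg v)]
        ring

end Decay

theorem off_diagonal_sum_le_of_separated_general
    (d : ℕ)
    (h : (Fin d → ℝ) → ℂ) (A τ : ℝ) (hτ : 0 < τ)
    (hdecay : ∀ x : Fin d → ℝ, ‖h x‖ ≤ A / (1 + ‖x‖ ^ ((d : ℝ) + τ)))
    (x : ℕ → (Fin d → ℝ)) (Δ : ℝ) (hΔ : 0 < Δ)
    (hsep : ∀ i j : ℕ, i ≠ j → Δ ≤ ‖x i - x j‖) :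
    ∀ ε > (0 : ℝ), ∃ δ > (0 : ℝ), ∀ n : ℕ, 1 ≤ n → ∀ i ∈ Finset.range n,
      ∑ j ∈ (Finset.range n).erase i, ‖h (δ • (x i - x j))‖ ≤ ε := by
  intro ε hε
  set s : ℝ := d + τ
  have hs : 0 < s := by positivity
  have hA := nonneg_of_forall_norm_le_div_one_add_rpow hs.ne' hdecay
  obtain ⟨C, hC⟩ := exists_forall_sum_norm_sub_rpow_le_of_separated hΔ
    (fun i j hij => hsep i j hij) (r := -s) (by simp [s, hτ])
  obtain ⟨δ, hδ, hδε⟩ := ((eventually_gt_atTop 0).and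
    ((((tendsto_rpow_neg_atTop hs).const_mul A).mul_const C).eventually
      (gt_mem_nhds (by simpa using hε)))).exists
  refine ⟨δ, hδ, fun n _ i _ => ?_⟩
  calc ∑ j ∈ (Finset.range n).erase i, ‖h (δ • (x i - x j))‖
      ≤ ∑ j ∈ (Finset.range n).erase i, A * δ ^ (-s) * ‖x i - x j‖ ^ (-s) :=
        Finset.sum_le_sum fun j hj => norm_apply_smul_le_of_decay hs hdecay hδ <|
          sub_ne_zero.2 fun hx => hΔ.not_ge <| by
            simpa [hx] using hsep i j (Finset.ne_of_mem_erase hj).symm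
    _ = A * δ ^ (-s) * ∑ j ∈ (Finset.range n).erase i, ‖x i - x j‖ ^ (-s) :=
        (Finset.mul_sum ..).symm
    _ ≤ A * δ ^ (-s) * C := by gcongr; exact hC i _
    _ ≤ ε := hδε.le

/-- If `h : ℝ^d → ℂ` decays like `A / (1 + |x|^{d+τ})` and the points `(x_i)` are pairwise
separated by a minimal distance `Δ > 0`, then for every `ε > 0` there is a scaling `δ > 0`
such that, uniformly in `n` and in `1 ≤ i ≤ n`, the sum over `j ≠ i`, `1 ≤ j ≤ n`, of
`|h(δ (x_i − x_j))|` is at most `ε`. -/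
theorem off_diagonal_sum_le_of_separated
    (d : ℕ) (hd : 1 ≤ d)
    (h : (Fin d → ℝ) → ℂ) (A τ : ℝ) (hτ : 0 < τ)
    (hdecay : ∀ x : Fin d → ℝ, ‖h x‖ ≤ A / (1 + ‖x‖ ^ ((d : ℝ) + τ)))
    (x : ℕ → (Fin d → ℝ)) (Δ : ℝ) (hΔ : 0 < Δ)
    (hsep : ∀ i j : ℕ, i ≠ j → Δ ≤ ‖x i - x j‖) :
    ∀ ε > (0 : ℝ), ∃ δ > (0 : ℝ), ∀ n : ℕ, 1 ≤ n → ∀ i ∈ Finset.range n,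
      ∑ j ∈ (Finset.range n).erase i, ‖h (δ • (x i - x j))‖ ≤ ε :=
  off_diagonal_sum_le_of_separated_general d h A τ hτ hdecay x Δ hΔ hsep
end

section
/- Let c : ℝ → ℝ be the triangular covariance function c(h) = (1 − |h|) for |h| ≤ 1 and c(h) = 0 for |h| > 1, and let x_i = i/2 for i ∈ ℕ⁺. For each n ≥ 1 let Σ_n be the n×n matrix with entries (Σ_n)_{ij} = c(x_i − x_j). Then Σ_n is the tridiagonal Toeplitz matrix with diagonal entries 1 and off-diagonal entries 1/2 (all other entries 0), its smallest eigenvalue equals 1 + cos(nπ/(n+1)), which is strictly positive for every n, and this smallest eigenvalue tends to 0 as n → ∞; hence inf over n ∈ ℕ⁺ of λ₁(Σ_n) = 0. -/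
open Matrix Filter
open scoped BigOperators Real Topology

/-!
`Σ_n` is the tridiagonal Toeplitz matrix with diagonal `1` and off-diagonal `1/2`. For
`θ = kπ/(n+1)`, `k = 1, …, n`, the vector `(sin((j+1)θ))_j` is an eigenvector with eigenvalue
`1 + cos θ`, by `sin((j-1)θ) + sin((j+1)θ) = 2 cos θ sin(jθ)` and because `sin(jθ)` vanishes at
`j = 0` and `j = n+1`. These `n` eigenvalues are distinct, and eigenvectors for distinct
eigenvalues are linearly independent, so they are the whole spectrum. The smallest one is
`1 + cos(nπ/(n+1)) > 0`, which tends to `1 + cos π = 0`.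
-/

open Module in
theorem Module.End.spectrum_eq_range_of_finrank_le {K V ι : Type*} [Field K] [AddCommGroup V]
    [Module K V] [FiniteDimensional K V] [Fintype ι] {f : End K V} {μ : ι → K}
    (hμ : Function.Injective μ) (hf : ∀ i, f.HasEigenvalue (μ i))
    (hcard : finrank K V ≤ Fintype.card ι) : spectrum K f = Set.range μ := by
  ext a
  rw [← Module.End.hasEigenvalue_iff_mem_spectrum]
  refine ⟨fun ha => ?_, fun ⟨i, hi⟩ => hi ▸ hf i⟩
  by_contra hne
  have hμ' : Function.Injective (fun o : Option ι => o.elim a μ) := by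
    rintro (_ | i) (_ | j) hij <;> simp_all [hμ.eq_iff]
  have hf' : ∀ o : Option ι, f.HasEigenvalue (o.elim a μ) := by
    rintro (_ | i)
    exacts [ha, hf i]
  choose v hv using fun o => (hf' o).exists_hasEigenvector
  have := (f.eigenvectors_linearIndependent' _ hμ' v hv).fintype_card_le_finrank
  rw [Fintype.card_option] at this
  omega

def tridiagToeplitz {R : Type*} [Zero R] (n : ℕ) (a b : R) : Matrix (Fin n) (Fin n) R :=
  fun i j => if (i : ℕ) = j then a else if (i : ℕ) + 1 = j ∨ (j : ℕ) + 1 = i then b else 0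

theorem tridiagToeplitz_isSymm {R : Type*} [Zero R] (n : ℕ) (a b : R) :
    (tridiagToeplitz n a b).IsSymm := by
  ext i j
  simp only [Matrix.transpose_apply, tridiagToeplitz]
  split_ifs <;> first | rfl | omega

/-- Padding the vector with `s 0 = s (n + 1) = 0` lets the first and last rows follow the
interior formula. -/
theorem tridiagToeplitz_mulVec_apply {R : Type*} [Semiring R] {n : ℕ} (a b : R) (s : ℕ → R)
    (h₀ : s 0 = 0) (hn : s (n + 1) = 0) (i : Fin n) :
    (tridiagToeplitz n a b *ᵥ fun j => s (j + 1)) i = a * s (i + 1) + b * (s i + s (i + 2)) := by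
  have hsplit : ∀ j : Fin n, tridiagToeplitz n a b i j * s (j + 1) =
      (if (j : ℕ) = i then a * s (j + 1) else 0) + (if (j : ℕ) = i + 1 then b * s (j + 1) else 0)
        + (if (j : ℕ) + 1 = i then b * s (j + 1) else 0) := by
    intro j
    simp only [tridiagToeplitz]
    split_ifs <;> first | (exfalso; omega) | simp
  simp only [Matrix.mulVec, dotProduct, hsplit, Finset.sum_add_distrib,
    Fin.sum_univ_eq_sum_range (fun j => if j = (i : ℕ) then a * s (j + 1) else 0),
    Fin.sum_univ_eq_sum_range (fun j => if j = (i : ℕ) + 1 then b * s (j + 1) else 0),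
    Fin.sum_univ_eq_sum_range (fun j => if j + 1 = (i : ℕ) then b * s (j + 1) else 0)]
  obtain ⟨i, hi⟩ := i
  have hnext : (if i + 1 ∈ Finset.range n then b * s (i + 1 + 1) else 0) = b * s (i + 2) := by
    split_ifs with h
    · rfl
    · obtain rfl : i + 1 = n := by simp at h; omega
      simp [hn]
  have hprev : (∑ j ∈ Finset.range n, if j + 1 = i then b * s (j + 1) else 0) = b * s i := by
    cases i with
    | zero => simp [h₀]
    | succ k => simp [Finset.sum_ite_eq', show k < n by omega]
  rw [Finset.sum_ite_eq', Finset.sum_ite_eq', if_pos (Finset.mem_range.2 hi), hnext, hprev]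
  noncomm_ring

theorem Real.sin_sub_add_sin_add (x y : ℝ) :
    Real.sin (x - y) + Real.sin (x + y) = 2 * Real.cos y * Real.sin x := by
  rw [Real.sin_sub, Real.sin_add]
  ring

theorem mul_pi_div_mem_Ioo {x y : ℝ} (hx : 0 < x) (hxy : x < y) : x * π / y ∈ Set.Ioo 0 π := by
  have hy : 0 < y := hx.trans hxy
  refine ⟨by positivity, ?_⟩
  rw [div_lt_iff₀ hy]
  nlinarith [Real.pi_pos]

theorem hasEigenvalue_toLin'_tridiagToeplitz {n : ℕ} (a b : ℝ) (k : Fin n) :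
    Module.End.HasEigenvalue (Matrix.toLin' (tridiagToeplitz n a b))
      (a + 2 * b * Real.cos ((k + 1) * π / (n + 1))) := by
  set θ : ℝ := (k + 1) * π / (n + 1)
  have hθ : θ ∈ Set.Ioo 0 π := mul_pi_div_mem_Ioo (by positivity) (by simp [k.isLt])
  have hsin_end : Real.sin ((n + 1 : ℕ) * θ) = 0 := by
    rw [show ((n + 1 : ℕ) : ℝ) * θ = (k + 1 : ℕ) * π by
      push_cast; exact mul_div_cancel₀ _ (by positivity), Real.sin_nat_mul_pi]
  refine Module.End.hasEigenvalue_of_hasEigenvector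
    (x := fun j : Fin n => Real.sin ((j + 1 : ℕ) * θ)) ⟨?_, ?_⟩
  · rw [Module.End.mem_eigenspace_iff, Matrix.toLin'_apply]
    ext i
    rw [tridiagToeplitz_mulVec_apply a b (fun m : ℕ => Real.sin (m * θ)) (by simp) hsin_end]
    have hrec := Real.sin_sub_add_sin_add ((i + 1 : ℕ) * θ) θ
    simp only [Pi.smul_apply, smul_eq_mul]
    push_cast at hrec ⊢
    ring_nf at hrec ⊢
    linear_combination b * hrec
  · intro h
    have h0 := congr_fun h ⟨0, k.pos⟩
    simp only [zero_add, Nat.cast_one, one_mul, Pi.zero_apply] at h0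
    exact (Real.sin_pos_of_pos_of_lt_pi hθ.1 hθ.2).ne' h0

theorem spectrum_tridiagToeplitz {n : ℕ} (a : ℝ) {b : ℝ} (hb : b ≠ 0) :
    spectrum ℝ (tridiagToeplitz n a b) =
      Set.range fun k : Fin n => a + 2 * b * Real.cos ((k + 1) * π / (n + 1)) := by
  rw [← Matrix.spectrum_toLin']
  refine Module.End.spectrum_eq_range_of_finrank_le (fun k l hkl => ?_)
    (hasEigenvalue_toLin'_tridiagToeplitz a b) (by simp)
  have hmem (k : Fin n) : ((k : ℝ) + 1) * π / (n + 1) ∈ Set.Icc 0 π :=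
    Set.Ioo_subset_Icc_self (mul_pi_div_mem_Ioo (by positivity) (by simp [k.isLt]))
  have hcos := Real.injOn_cos (hmem k) (hmem l) (by simpa [hb] using hkl)
  have : (n : ℝ) + 1 ≠ 0 := by positivity
  simpa [Real.pi_ne_zero, this, Fin.ext_iff] using hcos

theorem csInf_spectrum_tridiagToeplitz {n : ℕ} (hn : 0 < n) (a : ℝ) {b : ℝ} (hb : 0 < b) :
    sInf (spectrum ℝ (tridiagToeplitz n a b)) = a + 2 * b * Real.cos (n * π / (n + 1)) := by
  rw [spectrum_tridiagToeplitz a hb.ne']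
  refine IsLeast.csInf_eq ⟨⟨⟨n - 1, by omega⟩, ?_⟩, ?_⟩
  · simp [Nat.cast_pred hn]
  · rintro _ ⟨k, rfl⟩
    have hk : (k : ℝ) + 1 ≤ n := by exact_mod_cast k.isLt
    have hcos : Real.cos (n * π / (n + 1)) ≤ Real.cos ((k + 1) * π / (n + 1)) :=
      Real.cos_le_cos_of_nonneg_of_le_pi (by positivity)
        (mul_pi_div_mem_Ioo (by positivity) (by linarith)).2.le (by gcongr)
    dsimp only
    gcongr

theorem one_add_cos_natCast_mul_pi_div_pos {n : ℕ} (hn : 0 < n) :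
    0 < 1 + Real.cos (n * π / (n + 1)) := by
  have := Real.cos_lt_cos_of_nonneg_of_le_pi (by positivity) le_rfl
    (mul_pi_div_mem_Ioo (by positivity) (lt_add_one (n : ℝ))).2
  rw [Real.cos_pi] at this
  linarith

theorem tendsto_one_add_cos_natCast_mul_pi_div :
    Tendsto (fun n : ℕ => 1 + Real.cos (n * π / (n + 1))) atTop (𝓝 0) := by
  have h : Tendsto (fun n : ℕ => (n : ℝ) * π / (n + 1)) atTop (𝓝 π) := by
    simpa [mul_div_right_comm] using (tendsto_natCast_div_add_atTop (1 : ℝ)).mul_const π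
  simpa using ((Real.continuous_cos.tendsto π).comp h).const_add 1

theorem csInf_eq_zero_of_tendsto {T : Set ℝ} {f : ℕ → ℝ} (hT : ∀ x ∈ T, 0 ≤ x)
    (hf : ∀ᶠ n in atTop, f n ∈ T) (hlim : Tendsto f atTop (𝓝 0)) : sInf T = 0 :=
  le_antisymm (ge_of_tendsto hlim (hf.mono fun _ hn => csInf_le ⟨0, hT⟩ hn))
    (le_csInf (hf.exists.elim fun n hn => ⟨f n, hn⟩) hT)

noncomputable def triangularCovariance (h : ℝ) : ℝ := if |h| ≤ 1 then 1 - |h| else 0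

theorem triangularCovariance_half_sub_half (i j : ℕ) :
    triangularCovariance (((i : ℝ) + 1) / 2 - ((j : ℝ) + 1) / 2) =
      if i = j then 1 else if i + 1 = j ∨ j + 1 = i then 1 / 2 else 0 := by
  have habs : |((i : ℝ) + 1) / 2 - ((j : ℝ) + 1) / 2| = ((i - j : ℤ).natAbs : ℝ) / 2 := by
    rw [show ((i : ℝ) + 1) / 2 - ((j : ℝ) + 1) / 2 = ((i : ℝ) - j) / 2 by ring, abs_div, abs_two,
      Nat.cast_natAbs]
    push_cast
    rfl
  rw [triangularCovariance, habs]
  obtain h | h | h : (i - j : ℤ).natAbs = 0 ∨ (i - j : ℤ).natAbs = 1 ∨ 2 ≤ (i - j : ℤ).natAbs := by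
    omega
  · rw [h, if_pos (by omega : i = j)]
    norm_num
  · rw [h, if_neg (by omega : i ≠ j), if_pos (by omega : i + 1 = j ∨ j + 1 = i)]
    norm_num
  · have h2 : (2 : ℝ) ≤ (i - j : ℤ).natAbs := by exact_mod_cast h
    rw [if_neg (by omega : i ≠ j), if_neg (by omega : ¬(i + 1 = j ∨ j + 1 = i))]
    split_ifs <;> linarith

/-- Counterexample with the triangular covariance function `c(h) = (1 − |h|)·1_{|h| ≤ 1}`
and observation points `x_i = i/2`: the covariance matrix `Σ_n = {c(x_i − x_j)}` is the
tridiagonal Toeplitz matrix with unit diagonal and off-diagonal entries `1/2`, its smallest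
eigenvalue equals `1 + cos(nπ/(n+1))`, which is strictly positive for every `n` but tends
to `0` as `n → ∞`; hence the infimum over `n` of the smallest eigenvalues is `0`. -/
theorem triangular_covariance_smallest_eigenvalue_tends_to_zero
    (c : ℝ → ℝ) (hc : ∀ h : ℝ, c h = if |h| ≤ 1 then 1 - |h| else 0)
    (S : (n : ℕ) → Matrix (Fin n) (Fin n) ℝ)
    (hS : ∀ (n : ℕ) (i j : Fin n),
      S n i j = c (((i : ℕ) + 1 : ℝ) / 2 - ((j : ℕ) + 1 : ℝ) / 2)) :
    (∀ (n : ℕ) (i j : Fin n), S n i j =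
      if (i : ℕ) = (j : ℕ) then 1
      else if (i : ℕ) + 1 = (j : ℕ) ∨ (j : ℕ) + 1 = (i : ℕ) then 1 / 2
      else 0) ∧
    (∀ n : ℕ, 1 ≤ n → ∀ hH : (S n).IsHermitian,
      (⨅ i, hH.eigenvalues i) = 1 + Real.cos (n * π / (n + 1)) ∧
      0 < ⨅ i, hH.eigenvalues i) ∧
    Tendsto (fun n : ℕ => 1 + Real.cos (n * π / (n + 1))) atTop (𝓝 0) ∧
    sInf {x : ℝ | ∃ n : ℕ, 1 ≤ n ∧ ∃ hH : (S n).IsHermitian,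
      x = ⨅ i, hH.eigenvalues i} = 0 := by
  obtain rfl : S = fun n => tridiagToeplitz n 1 (1 / 2) :=
    funext fun n => Matrix.ext fun i j => by
      rw [hS, hc]
      exact triangularCovariance_half_sub_half i j
  have hmin (n : ℕ) (hn : 1 ≤ n) (hH : (tridiagToeplitz n (1 : ℝ) (1 / 2)).IsHermitian) :
      ⨅ i, hH.eigenvalues i = 1 + Real.cos (n * π / (n + 1)) := by
    rw [← sInf_range, ← hH.spectrum_real_eq_range_eigenvalues,
      csInf_spectrum_tridiagToeplitz hn 1 one_half_pos]
    ring
  refine ⟨fun n i j => rfl,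
    fun n hn hH => ⟨hmin n hn hH, hmin n hn hH ▸ one_add_cos_natCast_mul_pi_div_pos hn⟩,
    tendsto_one_add_cos_natCast_mul_pi_div,
    csInf_eq_zero_of_tendsto ?_ ?_ tendsto_one_add_cos_natCast_mul_pi_div⟩
  · rintro _ ⟨n, hn, hH, rfl⟩
    exact hmin n hn hH ▸ (one_add_cos_natCast_mul_pi_div_pos hn).le
  · filter_upwards [eventually_ge_atTop 1] with n hn
    exact ⟨n, hn, Matrix.isHermitian_iff_isSymm.2 (tridiagToeplitz_isSymm n 1 (1 / 2)),
      (hmin n hn _).symm⟩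
end
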